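/- On the surface S ⊂ C^4 defined by xy=(z²−1)z, zu=(y²−1)y, xu=(y²−1)(z²−1), the 2-form ω = (dx ∧ dz)/x, which is a priori regular only where x ≠ 0, extends to a holomorphic 2-form on all of S; on the chart U₃ = {z² ≠ 1, y ≠ 0, y ≠ −1} with coordinates φ₃ = (y−1)/z, ψ₃ = z it equals −ψ₃ dφ₃ ∧ dψ₃ / (φ₃ψ₃ + 1), whose denominator φ₃ψ₃ + 1 = y is nonvanishing on U₃. -/

import Mathlib

/-- The surface `S ⊂ ℂ⁴` given by `xy=(z²-1)z`, `zu=(y²-1)y`, `xu=(y²-1)(z²-1)`. -/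
def S4 : Set (ℂ × ℂ × ℂ × ℂ) :=
  {s | s.1 * s.2.1 = (s.2.2.1 ^ 2 - 1) * s.2.2.1 ∧
       s.2.2.1 * s.2.2.2 = (s.2.1 ^ 2 - 1) * s.2.1 ∧
       s.1 * s.2.2.2 = (s.2.1 ^ 2 - 1) * (s.2.2.1 ^ 2 - 1)}

/-- The chart `U₃ = {s ∈ S : z² ≠ 1, y ≠ 0, y ≠ -1}`. -/
def U3 : Set (ℂ × ℂ × ℂ × ℂ) :=
  {s ∈ S4 | s.2.2.1 ^ 2 ≠ 1 ∧ s.2.1 ≠ 0 ∧ s.2.1 ≠ -1}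

/-- The inverse of the coordinate chart `(φ₃, ψ₃) = ((y-1)/z, z)` on `U₃`:
`y = φψ + 1`, `z = ψ`, `x = (z²-1)z/y`, `u = (y²-1)y/z = φ(φψ+2)(φψ+1)`. -/
noncomputable def chart3 (φ ψ : ℂ) : ℂ × ℂ × ℂ × ℂ :=
  ((ψ ^ 2 - 1) * ψ / (φ * ψ + 1), φ * ψ + 1, ψ, φ * (φ * ψ + 2) * (φ * ψ + 1))

/-- The parameter domain of the chart. -/
def chart3Dom : Set (ℂ × ℂ) :=
  {q | q.1 * q.2 + 1 ≠ 0 ∧ q.1 * q.2 + 1 ≠ -1 ∧ q.2 ^ 2 ≠ 1}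

/-!
On `U₃` the relation `xy = (z²-1)z` solves for `x = (ψ²-1)ψ/(φψ+1)` with `z = ψ`, so
`dx ∧ dz = (∂x/∂φ) dφ ∧ dψ = -(ψ²-1)ψ²/(φψ+1)² dφ ∧ dψ`; dividing by `x` leaves
`-ψ/(φψ+1)`, and `φψ + 1 = y ≠ 0` on `U₃`.
The parametrization is bijective: where `z ≠ 0` the point is recovered from
`φ = (y-1)/z`, `ψ = z` (the relation `zu = (y²-1)y` then fixes `u`), while on `z = 0`
the relations force `x = 0`, `y = 1`, and `u = 2φ` recovers `φ`.
-/

lemma chart3_zero (φ : ℂ) : chart3 φ 0 = (0, 1, 0, 2 * φ) := by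
  simp only [chart3, Prod.mk.injEq]
  norm_num
  ring

lemma mapsTo_chart3 : Set.MapsTo (fun q : ℂ × ℂ => chart3 q.1 q.2) chart3Dom U3 := by
  rintro ⟨φ, ψ⟩ ⟨hy, hy2, hz⟩
  have hy' : ψ * φ + 1 ≠ 0 := by simpa [mul_comm] using hy
  refine ⟨⟨?_, ?_, ?_⟩, hz, hy, hy2⟩ <;> simp only [chart3] <;>
    (try field_simp) <;> ring

lemma eq_zero_and_eq_one_of_mem_U3 {x y u : ℂ} (h : (x, y, (0 : ℂ), u) ∈ U3) :
    x = 0 ∧ y = 1 := by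
  obtain ⟨⟨e1, e2, -⟩, -, hy, hy2⟩ := h
  simp only at e1 e2 hy hy2
  refine ⟨(mul_eq_zero.1 (by linear_combination e1)).resolve_right hy, ?_⟩
  have h0 : (y - 1) * ((y + 1) * y) = 0 := by linear_combination -e2
  have hy1 : y + 1 ≠ 0 := fun h => hy2 (by linear_combination h)
  exact sub_eq_zero.1 ((mul_eq_zero.1 h0).resolve_right (mul_ne_zero hy1 hy))

lemma chart3_div_of_mem_U3 {x y z u : ℂ} (h : (x, y, z, u) ∈ U3) (hz : z ≠ 0) :
    ((y - 1) / z, z) ∈ chart3Dom ∧ chart3 ((y - 1) / z) z = (x, y, z, u) := by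
  obtain ⟨⟨e1, e2, -⟩, hz2, hy, hy2⟩ := h
  simp only at e1 e2 hz2 hy hy2
  have hyz : (y - 1) / z * z + 1 = y := by rw [div_mul_cancel₀ _ hz]; ring
  refine ⟨⟨by simpa [hyz], by simpa [hyz], hz2⟩, ?_⟩
  simp only [chart3, hyz, Prod.mk.injEq, true_and]
  constructor
  · rw [← e1, mul_div_assoc, div_self hy, mul_one]
  · field_simp
    linear_combination -e2

lemma surjOn_chart3 : Set.SurjOn (fun q : ℂ × ℂ => chart3 q.1 q.2) chart3Dom U3 := by
  rintro ⟨x, y, z, u⟩ h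
  rcases eq_or_ne z 0 with rfl | hz
  · obtain ⟨rfl, rfl⟩ := eq_zero_and_eq_one_of_mem_U3 h
    refine ⟨(u / 2, 0), ⟨by norm_num, by norm_num, by norm_num⟩, ?_⟩
    simp only [chart3_zero, mul_div_cancel₀ u two_ne_zero]
  · exact ⟨_, chart3_div_of_mem_U3 h hz⟩

lemma injOn_chart3 : Set.InjOn (fun q : ℂ × ℂ => chart3 q.1 q.2) chart3Dom := by
  rintro ⟨φ₁, ψ₁⟩ - ⟨φ₂, ψ₂⟩ - he
  simp only [chart3, Prod.mk.injEq] at he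
  obtain ⟨-, hy, rfl, hu⟩ := he
  rcases eq_or_ne ψ₁ 0 with rfl | hψ
  · simp only [mul_zero, zero_add] at hu
    simp only [Prod.mk.injEq, and_true]
    linear_combination hu / 2
  · simp only [Prod.mk.injEq, and_true]
    exact mul_right_cancel₀ hψ (by linear_combination hy)

lemma eq_div_chart3 {φ ψ : ℂ} (hψ : ψ ≠ 0) :
    φ = ((chart3 φ ψ).2.1 - 1) / (chart3 φ ψ).2.2.1 := by
  simp only [chart3]
  field_simp
  ring

lemma deriv_div_mul_add_one (c ψ : ℂ) {φ : ℂ} (h : φ * ψ + 1 ≠ 0) :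
    deriv (fun a : ℂ => c / (a * ψ + 1)) φ = -(c * ψ) / (φ * ψ + 1) ^ 2 := by
  have hlin : HasDerivAt (fun a : ℂ => a * ψ + 1) ψ φ := by
    simpa using ((hasDerivAt_id φ).mul_const ψ).add_const 1
  have hd : HasDerivAt (fun a : ℂ => c / (a * ψ + 1))
      ((0 * (φ * ψ + 1) - c * ψ) / (φ * ψ + 1) ^ 2) φ :=
    (hasDerivAt_const φ c).div hlin h
  rw [hd.deriv]
  ring

/-- On the surface `S ⊂ ℂ⁴` cut out by `xy=(z²-1)z`, `zu=(y²-1)y`,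
`xu=(y²-1)(z²-1)`, the 2-form `ω = dx ∧ dz / x`, a priori regular only where
`x ≠ 0`, extends holomorphically to the chart
`U₃ = {z² ≠ 1, y ≠ 0, y ≠ -1}` with coordinates `φ₃ = (y-1)/z`, `ψ₃ = z`:
there it equals `-ψ₃ dφ₃ ∧ dψ₃ / (φ₃ψ₃ + 1)`, whose denominator
`φ₃ψ₃ + 1 = y` is nonvanishing on `U₃`. -/
theorem stmt_15 :
    -- `(φ₃, ψ₃)` are coordinates on `U₃`: the chart is a bijective parametrization
    (∀ φ ψ : ℂ, (φ, ψ) ∈ chart3Dom → chart3 φ ψ ∈ U3) ∧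
    ((fun q : ℂ × ℂ => chart3 q.1 q.2) '' chart3Dom = U3) ∧
    Set.InjOn (fun q : ℂ × ℂ => chart3 q.1 q.2) chart3Dom ∧
    -- on `z = ψ₃ ≠ 0` the chart coordinate is `φ₃ = (y-1)/z`
    (∀ φ ψ : ℂ, (φ, ψ) ∈ chart3Dom → ψ ≠ 0 →
      φ = ((chart3 φ ψ).2.1 - 1) / (chart3 φ ψ).2.2.1) ∧
    -- the denominator `φ₃ψ₃ + 1 = y` never vanishes on the chart
    (∀ φ ψ : ℂ, (φ, ψ) ∈ chart3Dom →
      φ * ψ + 1 = (chart3 φ ψ).2.1 ∧ φ * ψ + 1 ≠ 0) ∧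
    -- change of coordinates: the Jacobian `∂(x,z)/∂(φ₃,ψ₃)` equals
    -- `x · (-ψ₃/(φ₃ψ₃+1))`, i.e. `dx ∧ dz / x = -ψ₃ dφ₃ ∧ dψ₃ / (φ₃ψ₃+1)`
    (∀ φ ψ : ℂ, (φ, ψ) ∈ chart3Dom →
      deriv (fun a : ℂ => (ψ ^ 2 - 1) * ψ / (a * ψ + 1)) φ
          * deriv (fun b : ℂ => b) ψ
        - deriv (fun b : ℂ => (b ^ 2 - 1) * b / (φ * b + 1)) ψ
          * deriv (fun _ : ℂ => ψ) φ
        = ((ψ ^ 2 - 1) * ψ / (φ * ψ + 1)) * (-ψ / (φ * ψ + 1))) := by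
  refine ⟨fun φ ψ h => @mapsTo_chart3 (φ, ψ) h,
    mapsTo_chart3.image_subset.antisymm surjOn_chart3, injOn_chart3,
    fun φ ψ _ hψ => eq_div_chart3 hψ, fun φ ψ h => ⟨rfl, h.1⟩, ?_⟩
  rintro φ ψ ⟨hy, -, -⟩
  rw [deriv_div_mul_add_one ((ψ ^ 2 - 1) * ψ) ψ hy, deriv_id'', deriv_const, mul_one,
    mul_zero, sub_zero, div_mul_div_comm, div_eq_div_iff (pow_ne_zero 2 hy) (mul_ne_zero hy hy)]
  ring
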